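/- arXiv:2112.12305 — 4 statements merged into one kernel-verified Lean document; each statement's English description precedes it below -/
import Mathlib

section
/- Let G be a finite simple bipartite graph with edge ideal I = I(G) in R. Let b_0 be a vertex of G whose neighborhood is N(b_0) = {b_1, …, b_t}, and set f = x_{b_0} + x_{b_1} + ⋯ + x_{b_t} ∈ R. Then for every integer r ≥ 1, f is regular on R/I^r. -/
/-!
For bipartite `G`, a monomial `x^d` lies in `I(G)^r` iff `d` dominates a sum of `r` edge
exponents, and by a weighted König theorem (Hall's theorem applied to `d v` copies of each vertex
`v`) this holds iff `∑_{v ∈ C} d v ≥ r` for every vertex cover `C`. Every vertex cover `C`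
contains one, `C'`, that misses a vertex of the closed neighbourhood `{b₀} ∪ N(b₀)`: if all of
it lies in `C`, drop `b₀`. With respect to the weight `1_{C'}`, `f` has a term of weight `0`, so
in the domain `k⟦x⟧` multiplication by `f` does not change the weighted order. Hence if
`f g ∈ I^r`, every monomial of `g` has `C'`-weight, and so `C`-weight, at least `r`.
-/

open MvPolynomial

/-- The edge ideal of a finite simple graph `G`: the ideal of `k[x_v : v ∈ V]`
generated by the monomials `x_u * x_v` over all edges `{u, v}` of `G`. -/
noncomputable def edgeIdeal (k : Type*) [Field k] {V : Type*} (G : SimpleGraph V) :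
    Ideal (MvPolynomial V k) :=
  Ideal.span {p | ∃ u v : V, G.Adj u v ∧ p = X u * X v}

open Finset Pointwise

namespace MvPolynomial

variable {σ R : Type*} [CommSemiring R]

theorem coe_le_weightedOrder_iff (w : σ → ℕ) {p : MvPolynomial σ R} {n : ℕ} :
    (n : ℕ∞) ≤ (p : MvPowerSeries σ R).weightedOrder w ↔
      ∀ d ∈ p.support, n ≤ Finsupp.weight w d := by
  refine ⟨fun h d hd => ?_, fun h => MvPowerSeries.nat_le_weightedOrder w fun d hd => ?_⟩
  · exact_mod_cast h.trans (MvPowerSeries.weightedOrder_le w (by simpa [coeff_coe] using hd))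
  · by_contra hne
    exact hd.not_ge (h d (by simpa [coeff_coe] using hne))

theorem le_weight_of_le_weight_mul [NoZeroDivisors R] {w : σ → ℕ} {f g : MvPolynomial σ R}
    {n : ℕ} (hf : ∃ d ∈ f.support, Finsupp.weight w d = 0)
    (hfg : ∀ d ∈ (f * g).support, n ≤ Finsupp.weight w d) :
    ∀ d ∈ g.support, n ≤ Finsupp.weight w d := by
  obtain ⟨d, hd, hd0⟩ := hf
  have hf0 : (f : MvPowerSeries σ R).weightedOrder w = 0 :=
    nonpos_iff_eq_zero.1 ((MvPowerSeries.weightedOrder_le w (by simpa [coeff_coe] using hd)).trans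
      (by simp [hd0]))
  rwa [← coe_le_weightedOrder_iff, coe_mul, MvPowerSeries.weightedOrder_mul, hf0, zero_add,
    coe_le_weightedOrder_iff] at hfg

end MvPolynomial

theorem Fintype.exists_matching_of_card_le_filter_rel_add {α β : Type*} [Fintype α] [Fintype β]
    (r : α → β → Prop) [DecidableRel r] (D : ℕ)
    (h : ∀ A : Finset α, #A ≤ #{b | ∃ a ∈ A, r a b} + D) :
    ∃ M : Finset (α × β), Fintype.card α ≤ #M + D ∧ (∀ p ∈ M, r p.1 p.2) ∧
      (M : Set (α × β)).InjOn Prod.fst ∧ (M : Set (α × β)).InjOn Prod.snd := by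
  classical
  -- Hall's theorem, after adjoining `D` new targets related to everything
  obtain ⟨g, hg, hgr⟩ := (Fintype.all_card_le_filter_rel_iff_exists_injective
      fun (a : α) (b : β ⊕ Fin D) => b.elim (r a) fun _ => True).1 fun A => by
    rcases A.eq_empty_or_nonempty with rfl | ⟨a₀, ha₀⟩
    · simp
    calc #A ≤ #{b | ∃ a ∈ A, r a b} + D := h A
      _ = #(({b | ∃ a ∈ A, r a b} : Finset β).disjSum univ) := by simp
      _ ≤ _ := card_le_card fun b hb => by
        rcases b with b | i
        · simpa using hb
        · simpa using ⟨a₀, ha₀⟩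
  refine ⟨({p | g p.1 = .inl p.2} : Finset (α × β)), ?_, fun p hp => ?_,
    fun p hp q hq hpq => ?_, fun p hp q hq hpq => ?_⟩
  · have hleft : #{a | (g a).isLeft} ≤ #({p | g p.1 = .inl p.2} : Finset (α × β)) :=
      card_le_card_of_surjOn Prod.fst fun a ha => by
        obtain ⟨b, hb⟩ := Sum.isLeft_iff.1 (mem_filter.1 ha).2
        exact ⟨(a, b), by simpa using hb, rfl⟩
    have hright : #{a | ¬(g a).isLeft} ≤ D :=
      calc #{a | ¬(g a).isLeft} ≤ #((univ : Finset (Fin D)).image Sum.inr) :=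
            card_le_card_of_injOn g (fun a ha => by
              obtain ⟨i, hi⟩ := Sum.isRight_iff.1 (by simpa using (mem_filter.1 ha).2)
              simp [hi]) hg.injOn
        _ ≤ D := card_image_le.trans (by simp)
    have := card_filter_add_card_filter_not (s := univ) fun a => (g a).isLeft
    rw [card_univ] at this
    omega
  · simpa [(mem_filter.1 hp).2] using hgr p.1
  · have := (mem_filter.1 hp).2
    rw [hpq, (mem_filter.1 hq).2, Sum.inl.injEq] at this
    exact Prod.ext hpq this.symm
  · refine Prod.ext (hg ?_) hpq
    rw [(mem_filter.1 hp).2, (mem_filter.1 hq).2, hpq]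

theorem Set.fst_mem_of_fin_indicator {V : Type*} {s : Set V} {d : V → ℕ}
    (p : Σ v, Fin (s.indicator d v)) : p.1 ∈ s := by
  by_contra h
  simpa [Set.indicator_of_notMem h] using p.2.pos

theorem Finset.card_filter_sigma_fst_eq_le {V ι : Type*} [DecidableEq V] {d : V → ℕ}
    {S : Finset ι} {g : ι → Σ v, Fin (d v)} (hg : Set.InjOn g S) (x : V) :
    #{i ∈ S | (g i).1 = x} ≤ d x :=
  calc #{i ∈ S | (g i).1 = x}
      ≤ #(({x} : Finset V).sigma fun v => (univ : Finset (Fin (d v)))) :=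
        card_le_card_of_injOn g (fun i hi => by simp_all)
          (hg.mono (coe_subset.2 (filter_subset _ _)))
    _ = d x := by simp

namespace SimpleGraph

variable {V : Type*} (G : SimpleGraph V)

noncomputable def edgeExponent (e : V × V) : V →₀ ℕ := .single e.1 1 + .single e.2 1

def edgeSums (r : ℕ) : Set (V →₀ ℕ) :=
  {s | ∃ l : Multiset (V × V), Multiset.card l = r ∧ (∀ e ∈ l, G.Adj e.1 e.2) ∧
    (l.map edgeExponent).sum = s}

variable {G}

theorem edgeSums_zero : G.edgeSums 0 = {0} := by
  ext s
  simp [edgeSums, eq_comm]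

theorem edgeSums_succ (r : ℕ) : G.edgeSums (r + 1) = G.edgeSums r + G.edgeSums 1 := by
  ext s
  simp only [edgeSums, Set.mem_add, Set.mem_ofPred_eq, Multiset.card_eq_one]
  constructor
  · rintro ⟨l, hl, hadj, rfl⟩
    obtain ⟨e, l, rfl, rfl⟩ := Multiset.card_eq_succ_iff.1 hl
    exact ⟨_, ⟨l, rfl, fun e' he' => hadj e' (by simp [he']), rfl⟩, _,
      ⟨{e}, ⟨e, rfl⟩, by simpa using hadj e (by simp), rfl⟩, by simp [add_comm]⟩
  · rintro ⟨_, ⟨l, rfl, hadj, rfl⟩, _, ⟨l', ⟨e, rfl⟩, hadj', rfl⟩, rfl⟩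
    refine ⟨e ::ₘ l, by simp, fun e' he' => ?_, by simp [add_comm]⟩
    rcases Multiset.mem_cons.1 he' with rfl | he'
    exacts [hadj' e' (by simp), hadj e' he']

variable (k : Type*) [Field k]

theorem edgeIdeal_pow_eq_span (r : ℕ) :
    edgeIdeal k G ^ r = Ideal.span ((monomial · (1 : k)) '' G.edgeSums r) := by
  induction r with
  | zero => simp [edgeSums_zero]
  | succ r ih =>
    have h1 : edgeIdeal k G = Ideal.span ((monomial · (1 : k)) '' G.edgeSums 1) := by
      rw [edgeIdeal]
      congr 1
      ext p
      simp [edgeSums, Multiset.card_eq_one, X, monomial_mul, edgeExponent, eq_comm]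
    rw [pow_succ, ih, h1, Ideal.span_mul_span', edgeSums_succ r]
    congr 1
    ext p
    simp [Set.mem_mul, Set.mem_add, monomial_mul]

theorem mem_edgeIdeal_pow_iff {r : ℕ} {p : MvPolynomial V k} :
    p ∈ edgeIdeal k G ^ r ↔ ∀ d ∈ p.support, ∃ s ∈ G.edgeSums r, s ≤ d := by
  rw [edgeIdeal_pow_eq_span, mem_ideal_span_monomial_image]

theorem IsVertexCover.le_sum_of_mem_edgeSums {C : Finset V} (hC : G.IsVertexCover C) {r : ℕ}
    {s d : V →₀ ℕ} (hs : s ∈ G.edgeSums r) (hsd : s ≤ d) : r ≤ ∑ v ∈ C, d v := by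
  classical
  obtain ⟨l, rfl, hadj, rfl⟩ := hs
  calc Multiset.card l = (l.map fun _ => 1).sum := by simp
    _ ≤ (l.map fun e => ∑ v ∈ C, edgeExponent e v).sum :=
        Multiset.sum_map_le_sum_map _ _ fun e he => by
          rcases hC (hadj e he) with h | h <;>
            simp_all [edgeExponent, sum_add_distrib, Finsupp.single_apply]
    _ = ∑ v ∈ C, (l.map edgeExponent).sum v := by
        simpa [Multiset.map_map] using
          (map_multiset_sum (∑ v ∈ C, Finsupp.applyAddHom v) (l.map edgeExponent)).symm
    _ ≤ ∑ v ∈ C, d v := sum_le_sum fun v _ => hsd v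

variable [DecidableEq V]

theorem IsBipartiteWith.exists_edgeSums_le_of_matching {s t : Set V}
    (hG : G.IsBipartiteWith s t) {d : V →₀ ℕ}
    (M : Finset ((Σ v, Fin (s.indicator d v)) × Σ v, Fin (d v)))
    (hM : ∀ p ∈ M, G.Adj p.1.1 p.2.1)
    (hfst : (M : Set ((Σ v, Fin (s.indicator d v)) × Σ v, Fin (d v))).InjOn Prod.fst)
    (hsnd : (M : Set ((Σ v, Fin (s.indicator d v)) × Σ v, Fin (d v))).InjOn Prod.snd) :
    ∃ e ∈ G.edgeSums #M, e ≤ d := by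
  refine ⟨∑ p ∈ M, edgeExponent (p.1.1, p.2.1), ⟨M.val.map fun p => (p.1.1, p.2.1), by simp,
    fun e he => ?_, by rw [Multiset.map_map]; rfl⟩, fun x => ?_⟩
  · obtain ⟨p, hp, rfl⟩ := Multiset.mem_map.1 he
    exact hM p hp
  have hcount : (∑ p ∈ M, edgeExponent (p.1.1, p.2.1)) x =
      #{p ∈ M | p.1.1 = x} + #{p ∈ M | p.2.1 = x} := by
    simp [edgeExponent, sum_add_distrib, Finsupp.single_apply, sum_boole]
  have hl := card_filter_sigma_fst_eq_le hfst x
  have hr := card_filter_sigma_fst_eq_le hsnd x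
  by_cases hx : x ∈ s
  · have : #{p ∈ M | p.2.1 = x} = 0 := by
      refine card_eq_zero.2 (filter_eq_empty_iff.2 fun p hp hpx => ?_)
      have := hG.mem_of_mem_adj (Set.fst_mem_of_fin_indicator p.1) (hM p hp)
      rw [hpx] at this
      exact hG.disjoint.notMem_of_mem_left hx this
    simp_all
  · rw [Set.indicator_of_notMem hx] at hl
    omega

variable [Fintype V] [DecidableRel G.Adj]

/-- A weighted König theorem, proved by matching copies: vertex `v` has the `d v` copies
`⟨v, i⟩ : Σ v, Fin (d v)`, and on the side `s` only the copies of vertices of `s` are kept. -/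
theorem IsBipartiteWith.exists_edgeSums_le {s t : Set V} (hG : G.IsBipartiteWith s t)
    {d : V →₀ ℕ} {r : ℕ} (h : ∀ C : Finset V, G.IsVertexCover C → r ≤ ∑ v ∈ C, d v) :
    ∃ e ∈ G.edgeSums r, e ≤ d := by
  classical
  set A : Finset V := {v | v ∈ s}
  let N (W : Finset V) : Finset V := W.biUnion fun v => G.neighborFinset v
  -- `W` has maximal deficiency; then `(A \ W) ∪ N W` is a vertex cover of weight at most the
  -- size of the matching given by Hall's theorem with that deficiency
  obtain ⟨W, hWA, hWmax⟩ := A.powerset.exists_max_image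
    (fun W => ((∑ v ∈ W, d v : ℕ) : ℤ) - (∑ v ∈ N W, d v : ℕ)) ⟨∅, empty_mem_powerset A⟩
  rw [mem_powerset] at hWA
  have hNW : ∑ v ∈ N W, d v ≤ ∑ v ∈ W, d v := by
    have := hWmax ∅ (empty_mem_powerset A)
    simp only [N, sum_empty, biUnion_empty, Nat.cast_zero, sub_zero] at this ⊢
    omega
  have hall (S : Finset (Σ v, Fin (s.indicator d v))) :
      #S ≤ #{q : Σ v, Fin (d v) | ∃ p ∈ S, G.Adj p.1 q.1} +
        (∑ v ∈ W, d v - ∑ v ∈ N W, d v) := by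
    set WS := S.image Sigma.fst
    have hWS : WS ⊆ A := fun v hv => by
      obtain ⟨p, -, rfl⟩ := mem_image.1 hv
      simpa [A] using Set.fst_mem_of_fin_indicator p
    have h1 : #S ≤ ∑ v ∈ WS, d v :=
      calc #S ≤ #(WS.sigma fun v => (univ : Finset (Fin (s.indicator d v)))) :=
            card_le_card fun p hp => by simpa [WS] using ⟨p.2, hp⟩
        _ = ∑ v ∈ WS, d v := by
            simpa using sum_congr rfl fun v hv =>
              Set.indicator_of_mem (by simpa [A] using hWS hv) _
    have h2 : #{q : Σ v, Fin (d v) | ∃ p ∈ S, G.Adj p.1 q.1} = ∑ v ∈ N WS, d v :=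
      calc _ = #((N WS).sigma fun v => (univ : Finset (Fin (d v)))) := by
            congr 1
            ext q
            simp [N, WS]
        _ = _ := by simp
    have h3 := hWmax WS (mem_powerset.2 hWS)
    omega
  obtain ⟨M, hMcard, hMadj, hfst, hsnd⟩ :=
    Fintype.exists_matching_of_card_le_filter_rel_add _ _ hall
  have hcover : G.IsVertexCover ↑(A \ W ∪ N W) := by
    have (u v : V) (huv : G.Adj u v) (hu : u ∈ s) :
        u ∈ A \ W ∪ N W ∨ v ∈ A \ W ∪ N W := by
      by_cases huW : u ∈ W
      · exact Or.inr (mem_union_right _ (mem_biUnion.2 ⟨u, huW, by simpa using huv⟩))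
      · exact Or.inl (mem_union_left _ (mem_sdiff.2 ⟨by simpa [A] using hu, huW⟩))
    intro u v huv
    rcases hG.mem_of_adj huv with ⟨hu, -⟩ | ⟨-, hv⟩
    · exact this u v huv hu
    · exact (this v u huv.symm hv).symm
  have hcard : Fintype.card (Σ v, Fin (s.indicator d v)) = ∑ v ∈ A, d v := by
    simp [Set.indicator_apply, ← sum_filter, A]
  have hrM : r ≤ #M :=
    calc r ≤ ∑ v ∈ A \ W ∪ N W, d v := h _ hcover
      _ ≤ ∑ v ∈ A \ W, d v + ∑ v ∈ N W, d v := by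
        have := sum_union_inter (s₁ := A \ W) (s₂ := N W) (f := d)
        omega
      _ ≤ #M := by
        have := sum_sdiff hWA (f := d)
        omega
  obtain ⟨M', hM'M, rfl⟩ := exists_subset_card_eq hrM
  exact hG.exists_edgeSums_le_of_matching M' (fun p hp => hMadj p (hM'M hp))
    (hfst.mono (coe_subset.2 hM'M)) (hsnd.mono (coe_subset.2 hM'M))

theorem IsVertexCover.exists_subset_not_insert_neighborFinset_subset {C : Finset V}
    (hC : G.IsVertexCover C) (b : V) :
    ∃ C' ⊆ C, G.IsVertexCover C' ∧ ¬ insert b (G.neighborFinset b) ⊆ C' := by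
  by_cases hb : insert b (G.neighborFinset b) ⊆ C
  · refine ⟨C.erase b, erase_subset b C, fun u v huv => ?_,
      fun h => by simpa using h (mem_insert_self _ _)⟩
    have hN (u v : V) (huv : G.Adj u v) (hu : u = b) : v ∈ C.erase b :=
      mem_erase.2 ⟨(hu ▸ huv).ne', hb (mem_insert_of_mem (by simpa [← hu]))⟩
    by_cases hu : u = b
    · exact Or.inr (hN u v huv hu)
    by_cases hv : v = b
    · exact Or.inl (hN v u huv.symm hv)
    simpa [hu, hv] using hC huv
  · exact ⟨C, subset_refl C, hC, hb⟩

theorem IsBipartite.mem_edgeIdeal_pow_of_mul_mem (hG : G.IsBipartite) (b : V) {r : ℕ}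
    {g : MvPolynomial V k}
    (h : (∑ v ∈ insert b (G.neighborFinset b), X v) * g ∈ edgeIdeal k G ^ r) :
    g ∈ edgeIdeal k G ^ r := by
  obtain ⟨s, t, hst⟩ := isBipartite_iff_exists_isBipartiteWith.1 hG
  rw [mem_edgeIdeal_pow_iff] at h ⊢
  intro d hd
  refine hst.exists_edgeSums_le fun C hC => ?_
  obtain ⟨C', hC'C, hC', hb⟩ := hC.exists_subset_not_insert_neighborFinset_subset b
  obtain ⟨v, hv, hvC'⟩ := not_subset.1 hb
  have hw (e : V →₀ ℕ) :
      Finsupp.weight (fun u => if u ∈ C' then 1 else 0) e = ∑ u ∈ C', e u := by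
    simp [Finsupp.weight_eq_sum]
  have hvf : Finsupp.single v 1 ∈
      (∑ u ∈ insert b (G.neighborFinset b), X u : MvPolynomial V k).support := by
    rw [mem_support_iff, coeff_sum]
    simp [X, coeff_monomial, Finsupp.single_left_inj, hv]
  have hC'd := le_weight_of_le_weight_mul (w := fun u => if u ∈ C' then 1 else 0)
    ⟨_, hvf, by simp [Finsupp.weight_single, hvC']⟩ (fun e he => by
      obtain ⟨s, hs, hse⟩ := h e he
      exact hw e ▸ hC'.le_sum_of_mem_edgeSums hs hse) d hd
  calc r ≤ ∑ u ∈ C', d u := hw d ▸ hC'd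
    _ ≤ ∑ u ∈ C, d u := sum_le_sum_of_subset hC'C

end SimpleGraph

theorem stmt0_general {V k : Type*} [Fintype V] [Field k]
    (G : SimpleGraph V) [DecidableRel G.Adj]
    (hbip : G.Colorable 2)
    (b0 : V)
    (f : MvPolynomial V k)
    (hf : f = X b0 + ∑ v ∈ G.neighborFinset b0, X v)
    (r : ℕ) :
    IsSMulRegular ((MvPolynomial V k) ⧸ (edgeIdeal k G ^ r)) f := by
  classical
  rw [isSMulRegular_quotient_iff_mem_of_smul_mem]
  intro g hg
  rw [hf, ← sum_insert (G.notMem_neighborFinset_self b0)] at hg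
  exact SimpleGraph.IsBipartite.mem_edgeIdeal_pow_of_mul_mem k hbip b0 hg

/-- Let `G` be a finite simple bipartite graph with edge ideal
`I = I(G)`.  Let `b₀` be a vertex and `f = x_{b₀} + ∑_{v ∈ N(b₀)} x_v`.  Then for
every `r ≥ 1`, `f` is regular on `R / I^r` (multiplication by `f` is injective). -/
theorem stmt0 {V k : Type*} [Fintype V] [DecidableEq V] [Field k]
    (G : SimpleGraph V) [DecidableRel G.Adj]
    (hbip : G.Colorable 2)
    (b0 : V)
    (f : MvPolynomial V k)
    (hf : f = X b0 + ∑ v ∈ G.neighborFinset b0, X v)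
    (r : ℕ) (hr : 1 ≤ r) :
    IsSMulRegular ((MvPolynomial V k) ⧸ (edgeIdeal k G ^ r)) f :=
  stmt0_general G hbip b0 f hf r
end

section
/- Let H be a finite simple hypergraph on vertex set V with edge ideal I = I(H) ⊆ R, and let b_0, …, b_t be distinct vertices of H. Suppose that for every subset C ⊆ V such that the hypergraph H_C has a 2-saturating set, the set {b_0, …, b_t} is not contained in C. Then f = x_{b_0} + x_{b_1} + ⋯ + x_{b_t} is regular on R/I and regular on R/I². -/
open MvPolynomial

variable {V : Type*} [DecidableEq V]

/-- A subset `U` of the vertices is *decomposable* with respect to a family of edges `E`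
if `U` can be partitioned into two subsets each of which contains an edge. -/
def Decomposable (E : Set (Finset V)) (U : Finset V) : Prop :=
  ∃ U₁ U₂ : Finset V, U₁ ∪ U₂ = U ∧ Disjoint U₁ U₂ ∧
    (∃ e ∈ E, e ⊆ U₁) ∧ (∃ e ∈ E, e ⊆ U₂)

/-- The edge family of the hypergraph `H(i)` obtained by deleting the vertex `i`
from every edge (possibly creating the empty edge). -/
def deleteVertex (E : Set (Finset V)) (i : V) : Set (Finset V) :=
  (fun e => e.erase i) '' E

/-- `U` is a *2-saturating* set of the hypergraph with vertex set `Vs` and edge family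
`E` if `U ⊆ Vs`, `U` is indecomposable, and `U \ {i}` is decomposable in `H(i)` for
every vertex `i ∈ Vs`. -/
def TwoSaturating (Vs : Finset V) (E : Set (Finset V)) (U : Finset V) : Prop :=
  U ⊆ Vs ∧ ¬ Decomposable E U ∧ ∀ i ∈ Vs, Decomposable (deleteVertex E i) (U.erase i)

/-- The edge family of the restricted hypergraph `H_C`, whose edges are `e ∩ C`. -/
def restrictEdges (E : Set (Finset V)) (C : Finset V) : Set (Finset V) :=
  (fun e => e ∩ C) '' E

/-- The edge ideal of a hypergraph with edge family `E`. -/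
noncomputable def hEdgeIdeal (k : Type*) [Field k] (E : Set (Finset V)) :
    Ideal (MvPolynomial V k) :=
  Ideal.span {p | ∃ e ∈ E, p = ∏ v ∈ e, X v}

/-!
For a monomial ideal `J`, the linear form `∑_{v ∈ B} x_v` is a nonzerodivisor on `R/J` unless some
monomial `w ∉ J` has `x_v w ∈ J` for all `v ∈ B`. Take a zero divisor `g ≠ 0` with no monomial in
`J` and with support as small as possible. Splitting `g` according to whether `x_v m ∈ J` shows
that for each `v` either `x_v g ∈ J` or no monomial of `x_v g` lies in `J`. If the second case
occurs, the sum of the corresponding `x_v` is a nonzero linear form whose product with `g` lies in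
`J` but has no monomial in `J`, which is absurd; otherwise every monomial of `g` is such a `w`.

A monomial `w` is recorded, modulo `I(H)²`, by its support `S` and the set `S₂ ⊆ S` of variables
occurring in it at least squared. If `w` witnesses that `∑ x_{b_i}` is a zero divisor on `R/I²`,
enlarge `(S, S₂)` to a maximal pair `(A, A₂)` with the same properties: then `A \ A₂` is
2-saturating in `H_C` for `C = V \ A₂`, and `C` contains every `b_i`. A witness for `R/I` with
support `S` gives such a pair `(S ∪ {b₀}, S)`.
-/

open Finset
open scoped Pointwise

namespace MvPolynomial

variable {σ R : Type*} [CommRing R]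

lemma exists_eq_add_support_subset_filter (g : MvPolynomial σ R) (q : (σ →₀ ℕ) → Prop)
    [DecidablePred q] : ∃ g₁ g₂ : MvPolynomial σ R, g = g₁ + g₂ ∧
      g₁.support ⊆ {m ∈ g.support | q m} ∧ g₂.support ⊆ {m ∈ g.support | ¬ q m} := by
  classical
  have support_subset (s : Finset (σ →₀ ℕ)) : (∑ m ∈ s, monomial m (coeff m g)).support ⊆ s :=
    support_sum.trans <| biUnion_subset.2 fun m hm =>
      support_monomial_subset.trans (singleton_subset_iff.2 hm)
  exact ⟨_, _, by rw [sum_filter_add_sum_filter_not, ← as_sum], support_subset _, support_subset _⟩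

def IsMonomialIdeal (J : Ideal (MvPolynomial σ R)) : Prop :=
  ∀ p, p ∈ J ↔ ∀ m ∈ p.support, monomial m 1 ∈ J

lemma isMonomialIdeal_span_monomial_image [Nontrivial R] (G : Set (σ →₀ ℕ)) :
    IsMonomialIdeal (Ideal.span ((monomial · (1 : R)) '' G)) := by
  classical
  intro p
  simp only [mem_ideal_span_monomial_image, support_monomial, one_ne_zero, if_false,
    mem_singleton, forall_eq]

lemma sum_X_ne_zero [Nontrivial R] {B : Finset σ} (hB : B.Nonempty) :
    ∑ v ∈ B, (X v : MvPolynomial σ R) ≠ 0 := by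
  obtain ⟨v, hv⟩ := hB
  intro h
  exact one_ne_zero <|
    linearIndependent_iff'.1 (linearIndependent_X (R := R) (σ := σ)) B (fun _ => 1)
      (by simpa using h) v hv

lemma X_mul_monomial_one (v : σ) (m : σ →₀ ℕ) :
    X v * monomial m (1 : R) = monomial (Finsupp.single v 1 + m) 1 := by
  rw [X, monomial_mul, one_mul]

variable {J : Ideal (MvPolynomial σ R)}

lemma eq_zero_of_mem_of_forall_monomial_notMem (hJ : IsMonomialIdeal J) {p : MvPolynomial σ R}
    (hp : p ∈ J) (hout : ∀ m ∈ p.support, monomial m 1 ∉ J) : p = 0 :=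
  support_eq_empty.1 <| eq_empty_of_forall_notMem fun m hm => hout m hm ((hJ p).1 hp m hm)

lemma X_mul_mem_iff (hJ : IsMonomialIdeal J) (v : σ) (g : MvPolynomial σ R) :
    X v * g ∈ J ↔ ∀ m ∈ g.support, X v * monomial m 1 ∈ J := by
  rw [hJ, support_X_mul, forall_mem_map]
  simp only [addLeftEmbedding_apply, X_mul_monomial_one]

lemma forall_monomial_notMem_X_mul {v : σ} {g : MvPolynomial σ R}
    (hg : ∀ m ∈ g.support, X v * monomial m 1 ∉ J) :
    ∀ m ∈ (X v * g).support, monomial m 1 ∉ J := by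
  rw [support_X_mul, forall_mem_map]
  simpa only [addLeftEmbedding_apply, X_mul_monomial_one] using hg

variable [IsDomain R]

lemma X_mul_mem_or_of_forall_card_lt (hJ : IsMonomialIdeal J)
    {f g : MvPolynomial σ R} (ih : ∀ g' : MvPolynomial σ R, #g'.support < #g.support →
      (∀ m ∈ g'.support, monomial m 1 ∉ J) → f * g' ∈ J → g' = 0)
    (hfg : f * g ∈ J) (v : σ) : X v * g ∈ J ∨ ∀ m ∈ g.support, X v * monomial m 1 ∉ J := by
  classical
  by_contra! ⟨hvg, m₀, hm₀, hm₀J⟩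
  obtain ⟨g₁, g₂, hg, h₁, h₂⟩ :=
    exists_eq_add_support_subset_filter g (fun m => X v * monomial m 1 ∈ J)
  have hg₁ : X v * g₁ ∈ J := (X_mul_mem_iff hJ v g₁).2 fun m hm => (mem_filter.1 (h₁ hm)).2
  have hcard : #(X v * g₂).support < #g.support := by
    rw [support_X_mul, card_map]
    refine card_lt_card ((ssubset_iff_of_subset (h₂.trans (filter_subset _ _))).2 ⟨m₀, hm₀, ?_⟩)
    exact fun hm => (mem_filter.1 (h₂ hm)).2 hm₀J
  have hf₂ : f * (X v * g₂) ∈ J := by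
    have : f * (X v * g₂) = X v * (f * g) - f * (X v * g₁) := by rw [hg]; ring
    rw [this]
    exact J.sub_mem (J.mul_mem_left _ hfg) (J.mul_mem_left _ hg₁)
  have hg₂ : g₂ = 0 := (mul_eq_zero.1 <| ih _ hcard
    (forall_monomial_notMem_X_mul fun m hm => (mem_filter.1 (h₂ hm)).2) hf₂).resolve_left
    (X_ne_zero v)
  exact hvg (by rwa [hg, hg₂, add_zero])

theorem eq_zero_of_sum_X_mul_mem (hJ : IsMonomialIdeal J)
    {B : Finset σ} (hB : ∀ w, (∀ v ∈ B, X v * monomial w 1 ∈ J) → monomial w 1 ∈ J)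
    {g : MvPolynomial σ R} (hg : ∀ m ∈ g.support, monomial m 1 ∉ J)
    (hfg : (∑ v ∈ B, X v) * g ∈ J) : g = 0 := by
  classical
  induction hn : #g.support using Nat.strong_induction_on generalizing g with
  | _ n ih =>
  subst hn
  have hsplit :=
    X_mul_mem_or_of_forall_card_lt hJ (fun g' hlt hg' hfg' => ih _ hlt hg' hfg' rfl) hfg
  by_contra hg0
  obtain ⟨v₀, hv₀B, hv₀⟩ : ∃ v ∈ B, X v * g ∉ J := by
    by_contra! hall
    obtain ⟨m, hm⟩ := support_nonempty.2 hg0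
    exact hg m hm (hB m fun v hv => (X_mul_mem_iff hJ v g).1 (hall v hv) m hm)
  set B₀ := {v ∈ B | X v * g ∉ J}
  have hB₀ : (∑ v ∈ B₀, X v) * g ∈ J := by
    rw [sum_mul, ← sum_filter_not_add_sum_filter B (fun v => X v * g ∈ J)] at hfg
    rw [sum_mul]
    exact (J.add_mem_iff_left (J.sum_mem fun v hv => (mem_filter.1 hv).2)).1 hfg
  have hout : ∀ m ∈ ((∑ v ∈ B₀, X v) * g).support, monomial m 1 ∉ J := by
    intro m hm
    rw [sum_mul] at hm
    obtain ⟨v, hv, hmv⟩ := mem_biUnion.1 (support_sum hm)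
    exact forall_monomial_notMem_X_mul ((hsplit v).resolve_left (mem_filter.1 hv).2) m hmv
  rcases mul_eq_zero.1 (eq_zero_of_mem_of_forall_monomial_notMem hJ hB₀ hout) with h | h
  · exact sum_X_ne_zero ⟨v₀, mem_filter.2 ⟨hv₀B, hv₀⟩⟩ h
  · exact hg0 h

theorem mem_of_sum_X_mul_mem (hJ : IsMonomialIdeal J)
    {B : Finset σ} (hB : ∀ w, (∀ v ∈ B, X v * monomial w 1 ∈ J) → monomial w 1 ∈ J)
    {g : MvPolynomial σ R} (hfg : (∑ v ∈ B, X v) * g ∈ J) : g ∈ J := by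
  classical
  obtain ⟨g₁, g₂, rfl, h₁, h₂⟩ := exists_eq_add_support_subset_filter g (monomial · (1 : R) ∈ J)
  have hg₁ : g₁ ∈ J := (hJ g₁).2 fun m hm => (mem_filter.1 (h₁ hm)).2
  have hg₂ : g₂ = 0 := by
    refine eq_zero_of_sum_X_mul_mem hJ hB (fun m hm => (mem_filter.1 (h₂ hm)).2) ?_
    have : (∑ v ∈ B, X v) * g₂ = (∑ v ∈ B, X v) * (g₁ + g₂) - (∑ v ∈ B, X v) * g₁ := by ring
    rw [this]
    exact J.sub_mem hfg (J.mul_mem_left _ hg₁)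
  rwa [hg₂, add_zero]

theorem isSMulRegular_quotient_sum_X (hJ : IsMonomialIdeal J)
    {B : Finset σ} (hB : ∀ w, (∀ v ∈ B, X v * monomial w 1 ∈ J) → monomial w 1 ∈ J) :
    IsSMulRegular (MvPolynomial σ R ⧸ J) (∑ v ∈ B, X v : MvPolynomial σ R) :=
  (isSMulRegular_quotient_iff_mem_of_smul_mem J _).2 fun _ hg => mem_of_sum_X_mul_mem hJ hB hg

end MvPolynomial

lemma decomposable_iff {E : Set (Finset V)} {U : Finset V} :
    Decomposable E U ↔ ∃ e₁ ∈ E, ∃ e₂ ∈ E, e₁ ∪ e₂ ⊆ U ∧ Disjoint e₁ e₂ := by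
  constructor
  · rintro ⟨U₁, U₂, rfl, hU, ⟨e₁, he₁, h₁⟩, ⟨e₂, he₂, h₂⟩⟩
    exact ⟨e₁, he₁, e₂, he₂, union_subset_union h₁ h₂, hU.mono h₁ h₂⟩
  · rintro ⟨e₁, he₁, e₂, he₂, hU, he⟩
    refine ⟨e₁, U \ e₁, union_sdiff_of_subset (union_subset_left hU), disjoint_sdiff,
      ⟨e₁, he₁, Subset.rfl⟩, ⟨e₂, he₂, subset_sdiff.2 ⟨union_subset_right hU, he.symm⟩⟩⟩

lemma deleteVertex_restrictEdges (E : Set (Finset V)) (C : Finset V) (i : V) :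
    deleteVertex (restrictEdges E C) i = restrictEdges E (C.erase i) := by
  simp only [deleteVertex, restrictEdges, Set.image_image, inter_erase]

/-- The monomial with support `S` and exponent `≥ 2` exactly on `S₂` lies in `I(H)²` iff
`ContainsEdgePair E S S₂`. -/
def ContainsEdgePair (E : Set (Finset V)) (S S₂ : Finset V) : Prop :=
  ∃ e₁ ∈ E, ∃ e₂ ∈ E, e₁ ∪ e₂ ⊆ S ∧ e₁ ∩ e₂ ⊆ S₂

lemma ContainsEdgePair.mono {E : Set (Finset V)} {S S₂ T T₂ : Finset V} (hS : S ⊆ T)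
    (hS₂ : S₂ ⊆ T₂) : ContainsEdgePair E S S₂ → ContainsEdgePair E T T₂ :=
  fun ⟨e₁, he₁, e₂, he₂, hu, hi⟩ => ⟨e₁, he₁, e₂, he₂, hu.trans hS, hi.trans hS₂⟩

section Fintype

variable [Fintype V] {E : Set (Finset V)}

lemma decomposable_restrictEdges_compl_iff {S S₂ : Finset V} (h : S₂ ⊆ S) :
    Decomposable (restrictEdges E S₂ᶜ) (S \ S₂) ↔ ContainsEdgePair E S S₂ := by
  have hiff (e₁ e₂ : Finset V) : e₁ ∩ S₂ᶜ ∪ e₂ ∩ S₂ᶜ ⊆ S \ S₂ ∧ Disjoint (e₁ ∩ S₂ᶜ) (e₂ ∩ S₂ᶜ) ↔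
      e₁ ∪ e₂ ⊆ S ∧ e₁ ∩ e₂ ⊆ S₂ := by
    simp only [subset_iff, disjoint_left, mem_union, mem_inter, mem_compl, mem_sdiff]
    grind
  simp only [decomposable_iff, restrictEdges, Set.exists_mem_image, hiff, ContainsEdgePair]

lemma twoSaturating_compl {S S₂ : Finset V} (h : S₂ ⊆ S) (hS : ¬ ContainsEdgePair E S S₂)
    (hins : ∀ v ∉ S₂, ContainsEdgePair E (insert v S) (insert v S₂)) :
    TwoSaturating S₂ᶜ (restrictEdges E S₂ᶜ) (S \ S₂) := by
  refine ⟨fun v hv => mem_compl.2 (mem_sdiff.1 hv).2,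
    (decomposable_restrictEdges_compl_iff h).not.2 hS, fun v hv => ?_⟩
  rw [deleteVertex_restrictEdges, ← compl_insert, ← sdiff_insert, ← insert_sdiff_insert,
    decomposable_restrictEdges_compl_iff (insert_subset_insert v h)]
  exact hins v (mem_compl.1 hv)

theorem exists_twoSaturating_of_not_containsEdgePair {B S S₂ : Finset V} (h : S₂ ⊆ S)
    (hS : ¬ ContainsEdgePair E S S₂)
    (hB : ∀ v ∈ B, ContainsEdgePair E (insert v S) (insert v S₂)) :
    ∃ C : Finset V, (∃ U, TwoSaturating C (restrictEdges E C) U) ∧ B ⊆ C := by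
  let P (p : Finset V × Finset V) : Prop := p.2 ⊆ p.1 ∧ ¬ ContainsEdgePair E p.1 p.2 ∧
    ∀ v ∈ B, ContainsEdgePair E (insert v p.1) (insert v p.2)
  obtain ⟨⟨A, A₂⟩, -, ⟨hA₂, hA, hBA⟩, hmax⟩ :=
    Finite.exists_le_maximal (p := P) (a := (S, S₂)) ⟨h, hS, hB⟩
  have hins (v : V) (hv : v ∉ A₂) : ContainsEdgePair E (insert v A) (insert v A₂) := by
    -- otherwise `(insert v A, insert v A₂)` would be a strictly larger pair satisfying `P`
    by_contra hvA
    have hP : P (insert v A, insert v A₂) := ⟨insert_subset_insert v hA₂, hvA, fun u hu =>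
      (hBA u hu).mono (insert_subset_insert u (subset_insert v A))
        (insert_subset_insert u (subset_insert v A₂))⟩
    exact hv ((hmax hP ⟨subset_insert v A, subset_insert v A₂⟩).2 (mem_insert_self v A₂))
  refine ⟨A₂ᶜ, ⟨A \ A₂, twoSaturating_compl hA₂ hA hins⟩, fun v hv => mem_compl.2 fun hvA₂ => ?_⟩
  have := hBA v hv
  rw [insert_eq_of_mem (hA₂ hvA₂), insert_eq_of_mem hvA₂] at this
  exact hA this

theorem exists_twoSaturating_of_not_exists_subset {B S : Finset V} {v₀ : V} (hv₀ : v₀ ∈ B)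
    (hS : ¬ ∃ e ∈ E, e ⊆ S) (hB : ∀ v ∈ B, ∃ e ∈ E, e ⊆ insert v S) :
    ∃ C : Finset V, (∃ U, TwoSaturating C (restrictEdges E C) U) ∧ B ⊆ C := by
  refine exists_twoSaturating_of_not_containsEdgePair (subset_insert v₀ S) ?_ fun v hv => ?_
  · -- of two edges in `insert v₀ S` meeting only inside `S`, one already lies in `S`
    rintro ⟨e₁, he₁, e₂, he₂, hu, hi⟩
    by_cases hv₀e₂ : v₀ ∈ e₂
    · refine hS ⟨e₁, he₁, fun x hx => (mem_insert.1 (union_subset_left hu hx)).elim ?_ id⟩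
      exact fun hx₀ => hi (mem_inter.2 ⟨hx, hx₀ ▸ hv₀e₂⟩)
    · exact hS ⟨e₂, he₂, fun x hx =>
        (mem_insert.1 (union_subset_right hu hx)).resolve_left fun hx₀ => hv₀e₂ (hx₀ ▸ hx)⟩
  · obtain ⟨e, he, heS⟩ := hB v hv
    obtain ⟨e₀, he₀, he₀S⟩ := hB v₀ hv₀
    refine ⟨e, he, e₀, he₀, union_subset (heS.trans ?_) (he₀S.trans ?_), ?_⟩
    · exact insert_subset_insert v (subset_insert v₀ S)
    · exact subset_insert v _
    · exact inter_subset_left.trans heS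

end Fintype

noncomputable def edgeExponent (e : Finset V) : V →₀ ℕ := ∑ v ∈ e, Finsupp.single v 1

lemma edgeExponent_apply (e : Finset V) (v : V) : edgeExponent e v = if v ∈ e then 1 else 0 := by
  simp [edgeExponent, Finsupp.finsetSum_apply, Finsupp.single_apply]

lemma edgeExponent_le_iff {e : Finset V} {m : V →₀ ℕ} : edgeExponent e ≤ m ↔ e ⊆ m.support := by
  simp only [Finsupp.le_def, edgeExponent_apply, subset_iff, Finsupp.mem_support_iff]
  refine ⟨fun h v hv => ?_, fun h v => ?_⟩
  · have := h v; grind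
  · have := @h v; grind

lemma edgeExponent_add_le_iff {e₁ e₂ : Finset V} {m : V →₀ ℕ} :
    edgeExponent e₁ + edgeExponent e₂ ≤ m ↔
      e₁ ∪ e₂ ⊆ m.support ∧ e₁ ∩ e₂ ⊆ {v ∈ m.support | 2 ≤ m v} := by
  simp only [Finsupp.le_def, Finsupp.add_apply, edgeExponent_apply, subset_iff, mem_union,
    mem_inter, mem_filter, Finsupp.mem_support_iff]
  refine ⟨fun h => ⟨fun v hv => ?_, fun v hv => ?_⟩, fun h v => ?_⟩
  · have := h v; grind
  · have := h v; grind
  · have h₁ := @h.1 v; have h₂ := @h.2 v; grind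

lemma support_single_one_add (v : V) (m : V →₀ ℕ) :
    (Finsupp.single v 1 + m).support = insert v m.support := by
  ext u
  simp only [Finsupp.mem_support_iff, Finsupp.add_apply, Finsupp.single_apply, mem_insert]
  grind

lemma filter_two_le_single_one_add_subset (v : V) (m : V →₀ ℕ) :
    (insert v m.support).filter (fun u => 2 ≤ (Finsupp.single v 1 + m : V →₀ ℕ) u) ⊆
      insert v (m.support.filter fun u => 2 ≤ m u) := by
  intro u
  simp only [mem_filter, mem_insert, Finsupp.mem_support_iff, Finsupp.add_apply,
    Finsupp.single_apply]
  grind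

section EdgeIdeal

variable {k : Type*} [Field k]

lemma hEdgeIdeal_eq_span {σ : Type*} (E : Set (Finset σ)) :
    hEdgeIdeal k E = Ideal.span ((monomial · 1) '' (edgeExponent '' E)) := by
  rw [hEdgeIdeal, Set.image_image]
  congr 1
  ext p
  simp [edgeExponent, X, ← monomial_sum_one, eq_comm]

lemma hEdgeIdeal_sq_eq_span {σ : Type*} (E : Set (Finset σ)) :
    hEdgeIdeal k E ^ 2 =
      Ideal.span ((monomial · 1) '' (edgeExponent '' E + edgeExponent '' E)) := by
  rw [sq, hEdgeIdeal_eq_span, Ideal.span_mul_span']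
  congr 1
  ext p
  simp [Set.mem_mul, Set.mem_add, monomial_mul]

lemma isMonomialIdeal_hEdgeIdeal {σ : Type*} {E : Set (Finset σ)} :
    IsMonomialIdeal (hEdgeIdeal k E) := by
  rw [hEdgeIdeal_eq_span]
  exact isMonomialIdeal_span_monomial_image _

lemma isMonomialIdeal_hEdgeIdeal_sq {σ : Type*} {E : Set (Finset σ)} :
    IsMonomialIdeal (hEdgeIdeal k E ^ 2) := by
  rw [hEdgeIdeal_sq_eq_span]
  exact isMonomialIdeal_span_monomial_image _

variable {E : Set (Finset V)}

lemma monomial_mem_hEdgeIdeal_iff {m : V →₀ ℕ} :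
    monomial m (1 : k) ∈ hEdgeIdeal k E ↔ ∃ e ∈ E, e ⊆ m.support := by
  simp [hEdgeIdeal_eq_span, mem_ideal_span_monomial_image, edgeExponent_le_iff]

lemma monomial_mem_hEdgeIdeal_sq_iff {m : V →₀ ℕ} :
    monomial m (1 : k) ∈ hEdgeIdeal k E ^ 2 ↔
      ContainsEdgePair E m.support {v ∈ m.support | 2 ≤ m v} := by
  simp [hEdgeIdeal_sq_eq_span, mem_ideal_span_monomial_image, Set.mem_add,
    edgeExponent_add_le_iff, ContainsEdgePair]

theorem isSMulRegular_quotient_hEdgeIdeal [Fintype V] {B : Finset V} (hB : B.Nonempty)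
    (hsat : ∀ C : Finset V, (∃ U, TwoSaturating C (restrictEdges E C) U) → ¬ B ⊆ C) :
    IsSMulRegular (MvPolynomial V k ⧸ hEdgeIdeal k E) (∑ v ∈ B, X v : MvPolynomial V k) := by
  refine isSMulRegular_quotient_sum_X isMonomialIdeal_hEdgeIdeal fun w hw => ?_
  by_contra hw₀
  simp only [X_mul_monomial_one, monomial_mem_hEdgeIdeal_iff, support_single_one_add] at hw hw₀
  obtain ⟨v₀, hv₀⟩ := hB
  obtain ⟨C, hC, hBC⟩ := exists_twoSaturating_of_not_exists_subset hv₀ hw₀ hw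
  exact hsat C hC hBC

theorem isSMulRegular_quotient_hEdgeIdeal_sq [Fintype V] {B : Finset V}
    (hsat : ∀ C : Finset V, (∃ U, TwoSaturating C (restrictEdges E C) U) → ¬ B ⊆ C) :
    IsSMulRegular (MvPolynomial V k ⧸ hEdgeIdeal k E ^ 2) (∑ v ∈ B, X v : MvPolynomial V k) := by
  refine isSMulRegular_quotient_sum_X isMonomialIdeal_hEdgeIdeal_sq fun w hw => ?_
  by_contra hw₀
  rw [monomial_mem_hEdgeIdeal_sq_iff] at hw₀
  have hBw (v : V) (hv : v ∈ B) : ContainsEdgePair E (insert v w.support)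
      (insert v {u ∈ w.support | 2 ≤ w u}) := by
    have hvw := hw v hv
    rw [X_mul_monomial_one, monomial_mem_hEdgeIdeal_sq_iff, support_single_one_add] at hvw
    exact hvw.mono Subset.rfl (filter_two_le_single_one_add_subset v w)
  obtain ⟨C, hC, hBC⟩ := exists_twoSaturating_of_not_containsEdgePair (filter_subset _ _) hw₀ hBw
  exact hsat C hC hBC

end EdgeIdeal

theorem stmt2_general {V k : Type*} [Fintype V] [DecidableEq V] [Field k]
    (E : Set (Finset V))
    (t : ℕ) (b : Fin (t + 1) → V) (hb : Function.Injective b)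
    (hsat : ∀ C : Finset V,
      (∃ U : Finset V, TwoSaturating C (restrictEdges E C) U) → ¬ ∀ i, b i ∈ C)
    (f : MvPolynomial V k) (hf : f = ∑ i, X (b i)) :
    IsSMulRegular ((MvPolynomial V k) ⧸ (hEdgeIdeal k E)) f ∧
      IsSMulRegular ((MvPolynomial V k) ⧸ (hEdgeIdeal k E ^ 2)) f := by
  have hB : ∀ C : Finset V, (∃ U, TwoSaturating C (restrictEdges E C) U) → ¬ univ.image b ⊆ C :=
    fun C hC hbC => hsat C hC fun i => hbC (mem_image_of_mem b (mem_univ i))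
  rw [hf, ← sum_image hb.injOn]
  exact ⟨isSMulRegular_quotient_hEdgeIdeal (univ_nonempty.image b) hB,
    isSMulRegular_quotient_hEdgeIdeal_sq hB⟩

/-- Let `H` be a finite simple hypergraph with edge ideal `I = I(H)`
and let `b₀, …, b_t` be distinct vertices.  Suppose that for every subset `C` of the
vertices such that `H_C` has a 2-saturating set, `{b₀, …, b_t}` is not contained in `C`.
Then `f = x_{b₀} + ⋯ + x_{b_t}` is regular on `R/I` and on `R/I²`. -/
theorem stmt2 {V k : Type*} [Fintype V] [DecidableEq V] [Field k]
    (E : Set (Finset V))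
    (hne : ∀ e ∈ E, e.Nonempty)
    (hsimple : ∀ e₁ ∈ E, ∀ e₂ ∈ E, e₁ ⊆ e₂ → e₁ = e₂)
    (t : ℕ) (b : Fin (t + 1) → V) (hb : Function.Injective b)
    (hsat : ∀ C : Finset V,
      (∃ U : Finset V, TwoSaturating C (restrictEdges E C) U) → ¬ ∀ i, b i ∈ C)
    (f : MvPolynomial V k) (hf : f = ∑ i, X (b i)) :
    IsSMulRegular ((MvPolynomial V k) ⧸ (hEdgeIdeal k E)) f ∧
      IsSMulRegular ((MvPolynomial V k) ⧸ (hEdgeIdeal k E ^ 2)) f :=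
  stmt2_general E t b hb hsat f hf
end

section
/- Let M_1, M_2 be monomials and g_1, g_2 nonzero polynomials such that no variable occurring in M_1 or M_2 occurs in g_1 or g_2. Then S(M_1 g_1, M_2 g_2) = lcm(M_1, M_2) · S(g_1, g_2). -/
open MvPolynomial

variable {σ k : Type*} [Field k]

/-- The exponent of the leading monomial of `f` with respect to the monomial order `m`. -/
noncomputable def mdeg (m : MonomialOrder σ) (f : MvPolynomial σ k) : σ →₀ ℕ :=
  m.toSyn.symm (f.support.sup fun a => m.toSyn a)

/-- The leading term `in(f)` of `f` with respect to the monomial order `m`. -/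
noncomputable def ltm (m : MonomialOrder σ) (f : MvPolynomial σ k) : MvPolynomial σ k :=
  monomial (mdeg m f) (f.coeff (mdeg m f))

/-- The S-resultant `S(f, g) = (lcm(in f, in g)/in f)·f − (lcm(in f, in g)/in g)·g`
of two polynomials whose leading coefficients are `1`:  the least common multiple of the
two leading monomials has exponent `mdeg f ⊔ mdeg g`. -/
noncomputable def Sres (m : MonomialOrder σ) (f g : MvPolynomial σ k) :
    MvPolynomial σ k :=
  monomial (mdeg m f ⊔ mdeg m g - mdeg m f) (1 : k) * f
    - monomial (mdeg m f ⊔ mdeg m g - mdeg m g) (1 : k) * g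

/-! Multiplying `g` by `x^a` shifts its leading exponent by `a`. Since the `aᵢ` and the leading
exponents `dᵢ` of the `gᵢ` live on disjoint sets of variables, the lcm exponent
`(a₁ + d₁) ⊔ (a₂ + d₂)` splits as `(a₁ ⊔ a₂) + (d₁ ⊔ d₂)`, and `x^(a₁ ⊔ a₂)` factors out. -/

theorem mdeg_eq_degree (m : MonomialOrder σ) (f : MvPolynomial σ k) : mdeg m f = m.degree f :=
  rfl

theorem Finsupp.sup_add_sup_of_disjoint {ι : Type*} [DecidableEq ι] {a₁ a₂ d₁ d₂ : ι →₀ ℕ}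
    (h : Disjoint (a₁.support ∪ a₂.support) (d₁.support ∪ d₂.support)) :
    (a₁ + d₁) ⊔ (a₂ + d₂) = a₁ ⊔ a₂ + d₁ ⊔ d₂ := by
  ext i
  simp only [Finsupp.sup_apply, Finsupp.add_apply]
  by_cases hi : i ∈ a₁.support ∪ a₂.support
  · have hd := Finset.disjoint_left.mp h hi
    simp only [Finset.mem_union, Finsupp.mem_support_iff, not_or, not_not] at hd
    simp [hd.1, hd.2]
  · simp only [Finset.mem_union, Finsupp.mem_support_iff, not_or, not_not] at hi
    simp [hi.1, hi.2]

theorem MonomialOrder.support_degree_subset_vars {R : Type*} [CommSemiring R]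
    (m : MonomialOrder σ) (f : MvPolynomial σ R) : (m.degree f).support ⊆ f.vars := by
  rcases eq_or_ne f 0 with rfl | hf
  · simp
  · exact fun i hi => (mem_vars_iff_mem_support i).mpr ⟨m.degree f, m.degree_mem_support hf, hi⟩

theorem Sres_monomial_mul (m : MonomialOrder σ) (a₁ a₂ : σ →₀ ℕ) {g₁ g₂ : MvPolynomial σ k}
    (hg₁ : g₁ ≠ 0) (hg₂ : g₂ ≠ 0) :
    Sres m (monomial a₁ (1 : k) * g₁) (monomial a₂ (1 : k) * g₂) =
      monomial ((a₁ + m.degree g₁) ⊔ (a₂ + m.degree g₂) - m.degree g₁ ⊔ m.degree g₂) (1 : k) *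
        Sres m g₁ g₂ := by
  classical
  have hdeg : ∀ (a : σ →₀ ℕ) {g : MvPolynomial σ k}, g ≠ 0 →
      m.degree (monomial a (1 : k) * g) = a + m.degree g := fun a g hg => by
    rw [m.degree_mul (by simp) hg, m.degree_monomial, if_neg one_ne_zero]
  simp only [Sres, mdeg_eq_degree, hdeg a₁ hg₁, hdeg a₂ hg₂, mul_sub, ← mul_assoc, monomial_mul,
    one_mul]
  have hle : m.degree g₁ ⊔ m.degree g₂ ≤ (a₁ + m.degree g₁) ⊔ (a₂ + m.degree g₂) :=
    sup_le_sup (self_le_add_left _ _) (self_le_add_left _ _)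
  rw [tsub_add_tsub_cancel hle le_sup_left, tsub_add_tsub_cancel hle le_sup_right,
    tsub_add_eq_add_tsub le_sup_left, tsub_add_eq_add_tsub le_sup_right,
    add_comm a₁, add_comm a₂, add_tsub_add_eq_tsub_right, add_tsub_add_eq_tsub_right]

theorem stmt3_general [DecidableEq σ] (m : MonomialOrder σ)
    (a₁ a₂ : σ →₀ ℕ) (g₁ g₂ : MvPolynomial σ k)
    (hg₁ : g₁ ≠ 0) (hg₂ : g₂ ≠ 0)
    (hdisj : Disjoint (a₁.support ∪ a₂.support) (g₁.vars ∪ g₂.vars)) :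
    Sres m (monomial a₁ (1 : k) * g₁) (monomial a₂ (1 : k) * g₂)
      = monomial (a₁ ⊔ a₂) (1 : k) * Sres m g₁ g₂ := by
  have hdeg : Disjoint (a₁.support ∪ a₂.support)
      ((m.degree g₁).support ∪ (m.degree g₂).support) :=
    hdisj.mono_right (Finset.union_subset_union (m.support_degree_subset_vars g₁)
      (m.support_degree_subset_vars g₂))
  rw [Sres_monomial_mul m a₁ a₂ hg₁ hg₂, Finsupp.sup_add_sup_of_disjoint hdeg,
    add_tsub_cancel_right]

/-- Let `M₁ = x^{a₁}`, `M₂ = x^{a₂}` be monomials and `g₁, g₂` nonzero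
polynomials (with leading coefficient 1) such that no variable occurring in `M₁` or `M₂`
occurs in `g₁` or `g₂`.  Then `S(M₁g₁, M₂g₂) = lcm(M₁, M₂) · S(g₁, g₂)`. -/
theorem stmt3 [DecidableEq σ] (m : MonomialOrder σ)
    (a₁ a₂ : σ →₀ ℕ) (g₁ g₂ : MvPolynomial σ k)
    (hg₁ : g₁ ≠ 0) (hg₂ : g₂ ≠ 0)
    (hlc₁ : g₁.coeff (mdeg m g₁) = 1) (hlc₂ : g₂.coeff (mdeg m g₂) = 1)
    (hdisj : Disjoint (a₁.support ∪ a₂.support) (g₁.vars ∪ g₂.vars)) :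
    Sres m (monomial a₁ (1 : k) * g₁) (monomial a₂ (1 : k) * g₂)
      = monomial (a₁ ⊔ a₂) (1 : k) * Sres m g₁ g₂ :=
  stmt3_general m a₁ a₂ g₁ g₂ hg₁ hg₂ hdisj
end

section
/- Let G be a finite simple graph with edge ideal I = I(G) ⊆ R, and let c_1, …, c_r be distinct leaves of G (vertices of degree one), with b_i the unique neighbor of c_i. Assume that d(c_i, c_j) ≥ 4 for all i ≠ j, and that no b_i lies on a triangle of G (i.e., there is no pair of vertices u, v with {b_i, u}, {b_i, v} and {u, v} all edges of G). Then x_{c_1} + x_{b_1}, x_{c_2} + x_{b_2}, …, x_{c_r} + x_{b_r} is a regular sequence on R/I² (hence depth(R/I²) ≥ r). -/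
open MvPolynomial Finsupp
open scoped Pointwise

namespace MvPolynomial

variable {σ R : Type*} [CommRing R]

lemma exists_mem_support_of_coeff_X_mul_ne_zero [DecidableEq σ] {s : σ}
    {p : MvPolynomial σ R} {μ : σ →₀ ℕ} (h : coeff μ (X s * p) ≠ 0) :
    ∃ ν ∈ p.support, μ = ν + single s 1 := by
  rw [coeff_X_mul'] at h
  split_ifs at h with hs
  · refine ⟨μ - single s 1, mem_support_iff.mpr h, (tsub_add_cancel_of_le ?_).symm⟩
    simpa [Finsupp.single_le_iff, Nat.one_le_iff_ne_zero] using hs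
  · exact absurd rfl h

lemma mem_support_X_add_X_mul {c b : σ} {g : MvPolynomial σ R} {m : σ →₀ ℕ}
    (hm : m ∈ g.support) (h : ∀ ν ∈ g.support, ν + single b 1 ≠ m + single c 1) :
    m + single c 1 ∈ ((X c + X b) * g).support := by
  classical
  rw [mem_support_iff, add_mul, coeff_add, add_comm m, coeff_X_mul, add_comm (single c 1)]
  suffices coeff (m + single c 1) (X b * g) = 0 by rwa [this, add_zero, ← mem_support_iff]
  by_contra hb
  obtain ⟨ν, hν, hνm⟩ := exists_mem_support_of_coeff_X_mul_ne_zero hb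
  exact h ν hν hνm.symm

lemma exists_extreme_monomials_of_ne_zero {c b : σ} (hcb : c ≠ b) {g : MvPolynomial σ R}
    (hg : g ≠ 0) :
    ∃ (n : σ →₀ ℕ) (k : ℕ),
      n + single c k ∈ g.support ∧ n + single b k ∈ g.support ∧
      n + single c (k + 1) ∈ ((X c + X b) * g).support ∧
      n + single b (k + 1) ∈ ((X c + X b) * g).support := by
  classical
  -- `m` has maximal `c`-degree; `P k` is the last monomial of the string
  -- `P j = m * (x_b / x_c) ^ j` that lies in the support of `g`.
  obtain ⟨m, hm, hmax⟩ := g.support.exists_max_image (· c) (support_nonempty.mpr hg)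
  set a := m c
  set P : ℕ → σ →₀ ℕ := fun j => m.erase c + single c (a - j) + single b j
  have hP0 : P 0 = m := by simp [P, a, erase_add_single]
  have hPsucc : ∀ j < a, P (j + 1) + single c 1 = P j + single b 1 := by
    intro j hj
    have : a - j = a - (j + 1) + 1 := by omega
    simp only [P, this, single_add]
    abel
  set k := Nat.findGreatest (fun j => P j ∈ g.support) a
  have hk : P k ∈ g.support := Nat.findGreatest_spec (P := fun j => P j ∈ g.support)
    (Nat.zero_le a) (hP0 ▸ hm)
  have hn : m.erase c + single c (a - k) + single c k = m := by
    rw [add_assoc, ← single_add, Nat.sub_add_cancel (Nat.findGreatest_le a), erase_add_single]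
  refine ⟨m.erase c + single c (a - k), k, by rwa [hn], hk, ?_, ?_⟩
  · rw [single_add, ← add_assoc, hn]
    refine mem_support_X_add_X_mul hm fun ν hν hνm => ?_
    have hνc := congrArg (· c) hνm
    simp [hcb.symm] at hνc
    have := hmax ν hν
    omega
  · rw [single_add, ← add_assoc, add_comm (X c)]
    refine mem_support_X_add_X_mul hk fun ν hν hνk => ?_
    have hlt : k < a := by
      have hνc := congrArg (· c) hνk
      simp [hcb.symm] at hνc
      omega
    rw [← hPsucc k hlt] at hνk
    exact Nat.findGreatest_is_greatest (Nat.lt_succ_self k) hlt (add_right_cancel hνk ▸ hν)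

lemma exists_sub_mem_span_monomial_forall_not_le (D : Set (σ →₀ ℕ)) (g : MvPolynomial σ R) :
    ∃ g₀ : MvPolynomial σ R, g - g₀ ∈ Ideal.span ((monomial · 1) '' D) ∧
      ∀ m ∈ g₀.support, ¬∃ d ∈ D, d ≤ m := by
  classical
  refine ⟨∑ m ∈ g.support with ¬∃ d ∈ D, d ≤ m, monomial m (coeff m g), ?_, ?_⟩
  · have hsplit := Finset.sum_filter_add_sum_filter_not g.support (fun m => ∃ d ∈ D, d ≤ m)
      (fun m => monomial m (coeff m g))
    rw [← g.as_sum] at hsplit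
    rw [← eq_sub_of_add_eq hsplit]
    refine Ideal.sum_mem _ fun m hm => mem_ideal_span_monomial_image.mpr fun μ hμ => ?_
    rw [Finset.mem_singleton.mp (support_monomial_subset hμ)]
    exact (Finset.mem_filter.mp hm).2
  · intro μ hμ
    obtain ⟨m, hm, hμm⟩ := Finset.mem_biUnion.mp (support_sum hμ)
    rw [Finset.mem_singleton.mp (support_monomial_subset hμm)]
    exact (Finset.mem_filter.mp hm).2

theorem mem_span_monomial_of_X_add_X_mul_mem (D : Set (σ →₀ ℕ)) {c b : σ} (hcb : c ≠ b)
    (hD : ∀ (n : σ →₀ ℕ) (k : ℕ), (∃ d ∈ D, d ≤ n + single c (k + 1)) →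
      (∃ d ∈ D, d ≤ n + single b (k + 1)) →
      (∃ d ∈ D, d ≤ n + single c k) ∨ ∃ d ∈ D, d ≤ n + single b k)
    {g : MvPolynomial σ R} (hg : (X c + X b) * g ∈ Ideal.span ((monomial · 1) '' D)) :
    g ∈ Ideal.span ((monomial · 1) '' D) := by
  set J : Ideal (MvPolynomial σ R) := Ideal.span ((monomial · 1) '' D)
  obtain ⟨g₀, hcov, hg₀⟩ := exists_sub_mem_span_monomial_forall_not_le D g
  suffices g₀ = 0 by simpa [this] using hcov
  by_contra h₀
  have hmul : (X c + X b) * g₀ ∈ J := by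
    rw [show (X c + X b) * g₀ = (X c + X b) * g - (X c + X b) * (g - g₀) by ring]
    exact J.sub_mem hg (J.mul_mem_left _ hcov)
  rw [mem_ideal_span_monomial_image] at hmul
  obtain ⟨n, k, hc, hb, hc', hb'⟩ := exists_extreme_monomials_of_ne_zero hcb h₀
  exact (hD n k (hmul _ hc') (hmul _ hb')).elim (hg₀ _ hc) (hg₀ _ hb)

end MvPolynomial

section EdgeExponents

variable {V : Type*}

def edgeExponents (A : V → V → Prop) : Set (V →₀ ℕ) :=
  {d | ∃ u v, A u v ∧ single u 1 + single v 1 = d}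

variable [DecidableEq V] {A : V → V → Prop}

lemma eq_of_le_add_single_of_not_le {d μ : V →₀ ℕ} {x : V} (h : d ≤ μ + single x 1)
    (h' : ¬d ≤ μ) : d x = μ x + 1 := by
  rw [Finsupp.le_def] at h h'
  push Not at h'
  obtain ⟨y, hy⟩ := h'
  have hxy := h y
  have hx := h x
  simp only [Finsupp.add_apply, single_apply] at hxy hx
  split_ifs at hxy with hyx
  · subst hyx; simp at hx; omega
  · omega

lemma edgeExponents_apply_le_one {b : V} (hb : ¬A b b) {e : V →₀ ℕ}
    (he : e ∈ edgeExponents A) : e b ≤ 1 := by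
  obtain ⟨u, v, huv, rfl⟩ := he
  simp only [Finsupp.add_apply, single_apply]
  split_ifs with hu hv <;> first | omega | (subst hu hv; exact absurd huv hb)

lemma edgeExponents_eq_of_apply_ne_zero (hA : ∀ u v, A u v → A v u) {b : V} {e : V →₀ ℕ}
    (he : e ∈ edgeExponents A) (hbe : e b ≠ 0) :
    ∃ w, A b w ∧ e = single b 1 + single w 1 := by
  obtain ⟨u, v, huv, rfl⟩ := he
  by_cases hu : u = b
  · exact ⟨v, hu ▸ huv, by rw [hu]⟩
  · have hv : v = b := by
      by_contra hv
      simp [hu, hv] at hbe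
    exact ⟨u, hv ▸ hA _ _ huv, by rw [hv, add_comm]⟩

variable {b : V} {n : V →₀ ℕ}

lemma exists_le_of_adj_of_ne {w s t : V} (hw : A b w) (hst : A s t) (hwb : w ≠ b)
    (hws : w ≠ s) (hwt : w ≠ t) (hn : single b 1 + single s 1 + single t 1 ≤ n)
    (hnw : 1 ≤ n w) : ∃ d ∈ edgeExponents A + edgeExponents A, d ≤ n := by
  refine ⟨_, Set.add_mem_add ⟨b, w, hw, rfl⟩ ⟨s, t, hst, rfl⟩,
    Finsupp.le_def.mpr fun x => ?_⟩
  have hx := Finsupp.le_def.mp hn x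
  simp only [Finsupp.add_apply, single_apply] at hx ⊢
  split_ifs at hx ⊢ <;> subst_vars <;> first | omega | contradiction

lemma exists_le_of_adj_of_two_le {s t : V} (hs : A b s) (hst : A s t) (hsb : s ≠ b)
    (hts : t ≠ s) (hn : single b 1 + single s 1 + single t 1 ≤ n) (hns : 2 ≤ n s) :
    ∃ d ∈ edgeExponents A + edgeExponents A, d ≤ n := by
  refine ⟨_, Set.add_mem_add ⟨b, s, hs, rfl⟩ ⟨s, t, hst, rfl⟩,
    Finsupp.le_def.mpr fun x => ?_⟩
  have hx := Finsupp.le_def.mp hn x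
  simp only [Finsupp.add_apply, single_apply] at hx ⊢
  split_ifs at hx ⊢ <;> subst_vars <;> first | omega | contradiction

lemma exists_le_of_two_adj (hA : ∀ u v, A u v → A v u)
    (htri : ∀ u v, A b u → A b v → ¬A u v) {s t w w' : V} (hst : A s t) (hsb : s ≠ b)
    (htb : t ≠ b) (hw : A b w) (hw' : A b w') (hn : single b 1 + single s 1 + single t 1 ≤ n)
    (hn' : single b 1 + single w 1 + single w' 1 ≤ n) :
    ∃ d ∈ edgeExponents A + edgeExponents A, d ≤ n := by
  have hbb : ¬A b b := fun h => htri b b h h h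
  have hwb : w ≠ b := by rintro rfl; exact hbb hw
  have hw'b : w' ≠ b := by rintro rfl; exact hbb hw'
  have hnw := Finsupp.le_def.mp hn' w
  have hnw' := Finsupp.le_def.mp hn' w'
  simp only [Finsupp.add_apply, single_apply, if_neg hwb.symm, if_neg hw'b.symm, if_true,
    zero_add] at hnw hnw'
  by_cases hws : w = s ∨ w = t
  swap
  · push Not at hws
    exact exists_le_of_adj_of_ne hw hst hwb hws.1 hws.2 hn (by omega)
  by_cases hw's : w' = s ∨ w' = t
  swap
  · push Not at hw's
    exact exists_le_of_adj_of_ne hw' hst hw'b hw's.1 hw's.2 hn (by omega)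
  by_cases hww' : w = w'
  · subst hww'
    rcases hws with rfl | rfl
    · have hts : t ≠ w := by rintro rfl; exact htri _ _ hw hw hst
      exact exists_le_of_adj_of_two_le hw hst hwb hts hn (by simpa [one_add_one_eq_two] using hnw)
    · have hst' : s ≠ w := by rintro rfl; exact htri _ _ hw hw hst
      exact exists_le_of_adj_of_two_le hw (hA _ _ hst) hwb hst'
        (by rwa [add_right_comm] at hn) (by simpa [one_add_one_eq_two] using hnw)
  · exfalso
    rcases hws with rfl | rfl <;> rcases hw's with rfl | rfl
    · exact hww' rfl
    · exact htri _ _ hw hw' hst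
    · exact htri _ _ hw hw' (hA _ _ hst)
    · exact hww' rfl

lemma apply_le_two_of_mem_add (hbb : ¬A b b) {d : V →₀ ℕ}
    (hd : d ∈ edgeExponents A + edgeExponents A) : d b ≤ 2 := by
  obtain ⟨p, hp, q, hq, rfl⟩ := Set.mem_add.mp hd
  have := edgeExponents_apply_le_one hbb hp
  have := edgeExponents_apply_le_one hbb hq
  rw [Finsupp.add_apply]
  omega

lemma exists_eq_of_two_le_apply (hA : ∀ u v, A u v → A v u) (hbb : ¬A b b) {d : V →₀ ℕ}
    (hd : d ∈ edgeExponents A + edgeExponents A) (hdb : 2 ≤ d b) :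
    ∃ w w', A b w ∧ A b w' ∧ d = single b 1 + single w 1 + (single b 1 + single w' 1) := by
  obtain ⟨p, hp, q, hq, rfl⟩ := Set.mem_add.mp hd
  have := edgeExponents_apply_le_one hbb hp
  have := edgeExponents_apply_le_one hbb hq
  rw [Finsupp.add_apply] at hdb
  obtain ⟨w, hw, rfl⟩ := edgeExponents_eq_of_apply_ne_zero hA hp (b := b) (by omega)
  obtain ⟨w', hw', rfl⟩ := edgeExponents_eq_of_apply_ne_zero hA hq (b := b) (by omega)
  exact ⟨w, w', hw, hw', rfl⟩

lemma exists_eq_add_of_apply_ne_zero (hA : ∀ u v, A u v → A v u) {c : V}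
    (hleaf : ∀ v, A c v → v = b) {d : V →₀ ℕ}
    (hd : d ∈ edgeExponents A + edgeExponents A) (hdc : d c ≠ 0) :
    ∃ q ∈ edgeExponents A, d = single c 1 + single b 1 + q := by
  obtain ⟨p, hp, q, hq, rfl⟩ := Set.mem_add.mp hd
  by_cases hpc : p c = 0
  · obtain ⟨w, hw, rfl⟩ := edgeExponents_eq_of_apply_ne_zero hA hq (by simpa [hpc] using hdc)
    exact ⟨p, hp, by rw [hleaf w hw, add_comm]⟩
  · obtain ⟨w, hw, rfl⟩ := edgeExponents_eq_of_apply_ne_zero hA hp hpc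
    exact ⟨q, hq, by rw [hleaf w hw]⟩

theorem exists_le_or_exists_le_of_exists_le_add_single (hA : ∀ u v, A u v → A v u) {c : V}
    (hcb : A c b) (hleaf : ∀ v, A c v → v = b) (htri : ∀ u v, A b u → A b v → ¬A u v)
    (n : V →₀ ℕ) (k : ℕ)
    (hc : ∃ d ∈ edgeExponents A + edgeExponents A, d ≤ n + single c (k + 1))
    (hb : ∃ d ∈ edgeExponents A + edgeExponents A, d ≤ n + single b (k + 1)) :
    (∃ d ∈ edgeExponents A + edgeExponents A, d ≤ n + single c k) ∨
      ∃ d ∈ edgeExponents A + edgeExponents A, d ≤ n + single b k := by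
  have hbb : ¬A b b := fun h => htri b b h h h
  have hcb' : c ≠ b := by rintro rfl; exact hbb hcb
  obtain ⟨d, hd, hdle⟩ := hc
  obtain ⟨d', hd', hd'le⟩ := hb
  by_contra! hnot
  have hdc := eq_of_le_add_single_of_not_le (x := c) (μ := n + single c k)
    (by rwa [add_assoc, ← single_add]) (hnot.1 d hd)
  have hd'b := eq_of_le_add_single_of_not_le (x := b) (μ := n + single b k)
    (by rwa [add_assoc, ← single_add]) (hnot.2 d' hd')
  rw [Finsupp.add_apply, single_eq_same] at hdc hd'b
  obtain ⟨q, hq, rfl⟩ := exists_eq_add_of_apply_ne_zero hA hleaf hd (by omega)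
  have hnb := Finsupp.le_def.mp hdle b
  simp [hcb'] at hnb
  have hd'2 := apply_le_two_of_mem_add hbb hd'
  obtain rfl : k = 0 := by omega
  have hqb : q b = 0 := by omega
  obtain ⟨w, w', hw, hw', rfl⟩ := exists_eq_of_two_le_apply hA hbb hd' (by omega)
  obtain ⟨s, t, hst, rfl⟩ := hq
  simp only [Finsupp.add_apply, single_apply, Nat.add_eq_zero_iff, ite_eq_right_iff,
    one_ne_zero, imp_false] at hqb
  have hn : single b 1 + single s 1 + single t 1 ≤ n := by
    rw [zero_add, add_comm n] at hdle
    exact le_of_add_le_add_left (a := single c 1) (by convert hdle using 1; abel)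
  have hn' : single b 1 + single w 1 + single w' 1 ≤ n := by
    rw [zero_add] at hd'le
    exact le_of_add_le_add_right (a := single b 1) (by convert hd'le using 1; abel)
  obtain ⟨d₀, hd₀, hle⟩ := exists_le_of_two_adj hA htri hst hqb.1 hqb.2 hw hw' hn hn'
  exact hnot.1 d₀ hd₀ (by simpa using hle)

end EdgeExponents

namespace Ideal

variable {R : Type*} [CommRing R]

lemma mem_of_eq_or_eq_neg {I : Ideal R} {y z : R} (h : y = z ∨ y = -z) (hz : z ∈ I) :
    y ∈ I := by
  rcases h with rfl | rfl
  exacts [hz, I.neg_mem hz]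

section Retraction

variable (φ : R →+* R) {K : Ideal R}


lemma sup_eq_map_sup_of_sub_mem (hφ : ∀ g, g - φ g ∈ K) (I : Ideal R) :
    I ⊔ K = I.map φ ⊔ K := by
  refine le_antisymm (sup_le (fun x hx => ?_) le_sup_right)
    (sup_le (map_le_iff_le_comap.mpr fun x hx => ?_) le_sup_right)
  · rw [← add_sub_cancel (φ x) x]
    exact Submodule.add_mem_sup (mem_map_of_mem φ hx) (hφ x)
  · rw [mem_comap, ← sub_sub_cancel x (φ x)]
    exact (I ⊔ K).sub_mem (mem_sup_left hx) (mem_sup_right (hφ x))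

lemma mem_sup_of_mul_mem_sup (hK : K ≤ RingHom.ker φ) (hφ : ∀ g, g - φ g ∈ K)
    {I : Ideal R} {f : R} (hf : φ f = f) (hreg : ∀ h, f * h ∈ I.map φ → h ∈ I.map φ)
    {g : R} (hg : f * g ∈ I ⊔ K) : g ∈ I ⊔ K := by
  have hidem : φ.comp φ = φ := RingHom.ext fun x => by
    have := RingHom.mem_ker.mp (hK (hφ x))
    rw [map_sub, sub_eq_zero] at this
    exact this.symm
  rw [sup_eq_map_sup_of_sub_mem φ hφ] at hg ⊢
  obtain ⟨p, hp, q, hq, hpq⟩ := Submodule.mem_sup.mp hg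
  have hφp : φ p ∈ I.map φ := by
    simpa [map_map, hidem] using mem_map_of_mem φ hp
  have hfg : f * φ g = φ p := by
    rw [← hf, ← map_mul, ← hpq, map_add, RingHom.mem_ker.mp (hK hq), add_zero]
  rw [← add_sub_cancel (φ g) g]
  exact Submodule.add_mem_sup (hreg _ (hfg ▸ hφp)) (hφ g)

end Retraction

lemma Quotient.mk_mem_smul_top_iff (J I : Ideal R) (x : R) :
    Ideal.Quotient.mk J x ∈ (I • ⊤ : Submodule R (R ⧸ J)) ↔ x ∈ J ⊔ I := by
  rw [smul_top_eq_map, Submodule.restrictScalars_mem, Ideal.Quotient.algebraMap_eq,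
    mem_quotient_iff_mem_sup, sup_comm]

lemma ofList_take_ofFn {r : ℕ} (f : Fin r → R) (i : ℕ) :
    ofList ((List.ofFn f).take i) = span {p | ∃ j : Fin r, (j : ℕ) < i ∧ f j = p} := by
  refine congrArg span (Set.ext fun p => ?_)
  simp only [Set.mem_ofPred_eq, List.mem_take_iff_getElem, List.getElem_ofFn, List.length_ofFn,
    lt_min_iff]
  constructor
  · rintro ⟨j, ⟨hji, hjr⟩, rfl⟩
    exact ⟨⟨j, hjr⟩, hji, rfl⟩
  · rintro ⟨j, hj, rfl⟩
    exact ⟨j, ⟨hj, j.2⟩, rfl⟩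

end Ideal

section QuotientModule

variable {R : Type*} [CommRing R]

lemma isSMulRegular_quotient_smul_top_iff (J I : Ideal R) (f : R) :
    IsSMulRegular ((R ⧸ J) ⧸ (I • ⊤ : Submodule R (R ⧸ J))) f ↔
      ∀ g, f * g ∈ J ⊔ I → g ∈ J ⊔ I := by
  rw [isSMulRegular_quotient_iff_mem_of_smul_mem]
  refine Ideal.Quotient.mk_surjective.forall.trans (forall_congr' fun g => ?_)
  rw [Algebra.smul_def, Ideal.Quotient.algebraMap_eq, ← map_mul,
    Ideal.Quotient.mk_mem_smul_top_iff, Ideal.Quotient.mk_mem_smul_top_iff]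

lemma top_ne_smul_top_of_sup_ne_top {J I : Ideal R} (h : J ⊔ I ≠ ⊤) :
    (⊤ : Submodule R (R ⧸ J)) ≠ I • ⊤ := fun heq => by
  apply h
  rw [Ideal.eq_top_iff_one, ← Ideal.Quotient.mk_mem_smul_top_iff, ← heq]
  trivial

end QuotientModule

section MonomialSpan

variable {σ R : Type*} [CommRing R]

lemma X_mul_X_eq_monomial (u v : σ) :
    (X u * X v : MvPolynomial σ R) = monomial (single u 1 + single v 1) 1 := by
  rw [X, X, monomial_mul, one_mul]

lemma span_monomial_pow_two (D : Set (σ →₀ ℕ)) :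
    Ideal.span ((monomial · (1 : R)) '' D) ^ 2 =
      Ideal.span ((monomial · (1 : R)) '' (D + D)) := by
  rw [pow_two, Ideal.span_mul_span']
  congr 1
  ext p
  simp only [Set.mem_mul, Set.mem_image, Set.mem_add]
  constructor
  · rintro ⟨_, ⟨d, hd, rfl⟩, _, ⟨d', hd', rfl⟩, rfl⟩
    exact ⟨d + d', ⟨d, hd, d', hd', rfl⟩, by rw [monomial_mul, one_mul]⟩
  · rintro ⟨_, ⟨d, hd, d', hd', rfl⟩, rfl⟩
    exact ⟨_, ⟨d, hd, rfl⟩, _, ⟨d', hd', rfl⟩, by rw [monomial_mul, one_mul]⟩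

lemma map_span_monomial_edgeExponents (φ : MvPolynomial σ R →+* MvPolynomial σ R)
    (τ : σ → σ) (hφ : ∀ v, φ (X v) = X (τ v) ∨ φ (X v) = -X (τ v))
    (A : σ → σ → Prop) :
    (Ideal.span ((monomial · (1 : R)) '' edgeExponents A)).map φ =
      Ideal.span ((monomial · (1 : R)) '' edgeExponents (Relation.Map A τ τ)) := by
  have hφ2 : ∀ u v,
      φ (X u * X v) = X (τ u) * X (τ v) ∨ φ (X u * X v) = -(X (τ u) * X (τ v)) := by
    intro u v
    rw [map_mul]
    rcases hφ u with hu | hu <;> rcases hφ v with hv | hv <;> rw [hu, hv]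
    exacts [Or.inl rfl, Or.inr (mul_neg _ _), Or.inr (neg_mul _ _), Or.inl (neg_mul_neg _ _)]
  rw [Ideal.map_span]
  apply le_antisymm <;> rw [Ideal.span_le]
  · rintro _ ⟨_, ⟨_, ⟨u, v, huv, rfl⟩, rfl⟩, rfl⟩
    dsimp only
    rw [← X_mul_X_eq_monomial]
    refine Ideal.mem_of_eq_or_eq_neg (hφ2 u v)
      (Ideal.subset_span ⟨_, ⟨τ u, τ v, ⟨u, v, huv, rfl, rfl⟩, rfl⟩, ?_⟩)
    exact (X_mul_X_eq_monomial _ _).symm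
  · rintro _ ⟨_, ⟨_, _, ⟨u, v, huv, rfl, rfl⟩, rfl⟩, rfl⟩
    dsimp only
    rw [← X_mul_X_eq_monomial]
    refine Ideal.mem_of_eq_or_eq_neg (z := φ (X u * X v)) ?_
      (Ideal.subset_span ⟨_, ⟨_, ⟨u, v, huv, rfl⟩, rfl⟩, by rw [X_mul_X_eq_monomial]⟩)
    rcases hφ2 u v with h | h <;> rw [h]
    exacts [Or.inl rfl, Or.inr (neg_neg _).symm]

end MonomialSpan

lemma edgeIdeal_eq_span_monomial (k : Type*) [Field k] {V : Type*} (G : SimpleGraph V) :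
    edgeIdeal k G = Ideal.span ((monomial · (1 : k)) '' edgeExponents G.Adj) := by
  rw [edgeIdeal]
  congr 1
  ext p
  constructor
  · rintro ⟨u, v, huv, rfl⟩
    exact ⟨_, ⟨u, v, huv, rfl⟩, (X_mul_X_eq_monomial u v).symm⟩
  · rintro ⟨_, ⟨u, v, huv, rfl⟩, rfl⟩
    exact ⟨u, v, huv, (X_mul_X_eq_monomial u v).symm⟩

section Leaves

variable {V : Type*} {r : ℕ}

open Classical in
noncomputable def contractLeaves (c b : Fin r → V) (i : ℕ) (v : V) : V :=
  if h : ∃ j : Fin r, (j : ℕ) < i ∧ c j = v then b h.choose else v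

open Classical in
noncomputable def substLeaves (k : Type*) [CommRing k] (c b : Fin r → V) (i : ℕ) :
    MvPolynomial V k →+* MvPolynomial V k :=
  eval₂Hom C fun v =>
    if ∃ j : Fin r, (j : ℕ) < i ∧ c j = v then -X (contractLeaves c b i v) else X v

noncomputable def leafSumIdeal (k : Type*) [CommRing k] (c b : Fin r → V) (i : ℕ) :
    Ideal (MvPolynomial V k) :=
  Ideal.span {p | ∃ j : Fin r, (j : ℕ) < i ∧ X (c j) + X (b j) = p}

/-- Merging `c j` into `b j` for `j < i` turns the edge `c j b j` into a loop at `b j`. -/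
def contractedAdj (G : SimpleGraph V) (c b : Fin r → V) (i : ℕ) : V → V → Prop :=
  Relation.Map G.Adj (contractLeaves c b i) (contractLeaves c b i)

variable {k : Type*} [CommRing k] {c b : Fin r → V} {i : ℕ}

lemma contractLeaves_of_not {v : V} (h : ¬∃ j : Fin r, (j : ℕ) < i ∧ c j = v) :
    contractLeaves c b i v = v :=
  dif_neg h

lemma contractLeaves_leaf (hc : Function.Injective c) {j : Fin r} (hj : (j : ℕ) < i) :
    contractLeaves c b i (c j) = b j := by
  have h : ∃ l : Fin r, (l : ℕ) < i ∧ c l = c j := ⟨j, hj, rfl⟩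
  rw [contractLeaves, dif_pos h, hc h.choose_spec.2]

lemma contractLeaves_eq_or (hc : Function.Injective c) (v : V) :
    contractLeaves c b i v = v ∨
      ∃ j : Fin r, (j : ℕ) < i ∧ v = c j ∧ contractLeaves c b i v = b j := by
  by_cases h : ∃ j : Fin r, (j : ℕ) < i ∧ c j = v
  · obtain ⟨j, hj, rfl⟩ := h
    exact Or.inr ⟨j, hj, rfl, contractLeaves_leaf hc hj⟩
  · exact Or.inl (contractLeaves_of_not h)

lemma not_exists_lt_and_eq_self (hc : Function.Injective c) (i : Fin r) :
    ¬∃ j : Fin r, (j : ℕ) < i ∧ c j = c i :=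
  fun ⟨_, hj, h⟩ => (hc h ▸ hj).false

lemma substLeaves_X (v : V) :
    substLeaves k c b i (X v) = X (contractLeaves c b i v) ∨
      substLeaves k c b i (X v) = -X (contractLeaves c b i v) := by
  rw [substLeaves, eval₂Hom_X']
  split_ifs with h
  · exact Or.inr rfl
  · exact Or.inl (by rw [contractLeaves_of_not h])

lemma substLeaves_X_of_not {v : V} (h : ¬∃ j : Fin r, (j : ℕ) < i ∧ c j = v) :
    substLeaves k c b i (X v) = X v := by
  rw [substLeaves, eval₂Hom_X', if_neg h]

lemma substLeaves_X_leaf (hc : Function.Injective c) {j : Fin r} (hj : (j : ℕ) < i) :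
    substLeaves k c b i (X (c j)) = -X (b j) := by
  rw [substLeaves, eval₂Hom_X', if_pos ⟨j, hj, rfl⟩, contractLeaves_leaf hc hj]

lemma leafSumIdeal_le_ker (hc : Function.Injective c)
    (hb : ∀ j, ¬∃ l : Fin r, (l : ℕ) < i ∧ c l = b j) :
    leafSumIdeal k c b i ≤ RingHom.ker (substLeaves k c b i) := by
  rw [leafSumIdeal, Ideal.span_le]
  rintro _ ⟨j, hj, rfl⟩
  rw [SetLike.mem_coe, RingHom.mem_ker, map_add, substLeaves_X_leaf hc hj,
    substLeaves_X_of_not (hb j), neg_add_cancel]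

lemma sub_substLeaves_mem (hc : Function.Injective c) (g : MvPolynomial V k) :
    g - substLeaves k c b i g ∈ leafSumIdeal k c b i := by
  rw [← Ideal.Quotient.eq]
  suffices (Ideal.Quotient.mk _).comp (substLeaves k c b i) = Ideal.Quotient.mk _ from
    (RingHom.congr_fun this g).symm
  refine ringHom_ext (fun a => by simp [substLeaves]) fun v => ?_
  by_cases h : ∃ j : Fin r, (j : ℕ) < i ∧ c j = v
  · obtain ⟨j, hj, rfl⟩ := h
    rw [RingHom.comp_apply, substLeaves_X_leaf hc hj, Ideal.Quotient.eq, ← neg_add', add_comm]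
    exact neg_mem (Ideal.subset_span ⟨j, hj, rfl⟩)
  · rw [RingHom.comp_apply, substLeaves_X_of_not h]

structure SimpleGraph.IsSeparatedLeafFamily (G : SimpleGraph V) (c b : Fin r → V) : Prop where
  injective : Function.Injective c
  adj : ∀ j, G.Adj (c j) (b j)
  eq_of_adj : ∀ j v, G.Adj (c j) v → v = b j
  four_le_dist : ∀ i j, i ≠ j → 4 ≤ G.dist (c i) (c j)

namespace SimpleGraph.IsSeparatedLeafFamily

variable {G : SimpleGraph V}

lemma four_le_length (hL : G.IsSeparatedLeafFamily c b) {i j : Fin r} (hij : i ≠ j)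
    (p : G.Walk (c i) (c j)) : 4 ≤ p.length :=
  (hL.four_le_dist i j hij).trans (dist_le p)

lemma neighbor_ne_leaf (hL : G.IsSeparatedLeafFamily c b) (i j : Fin r) : b i ≠ c j := by
  intro h
  by_cases hij : i = j
  · subst hij
    exact (hL.adj i).ne h.symm
  · have := hL.four_le_length hij (.cons (h ▸ hL.adj i) .nil)
    simp at this

lemma not_adj_neighbor_leaf (hL : G.IsSeparatedLeafFamily c b) {i j : Fin r} (hij : i ≠ j) :
    ¬G.Adj (b i) (c j) := fun h => by
  have := hL.four_le_length hij (.cons (hL.adj i) (.cons h .nil))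
  simp at this

lemma not_adj_neighbor_neighbor (hL : G.IsSeparatedLeafFamily c b) {i j : Fin r}
    (hij : i ≠ j) : ¬G.Adj (b i) (b j) := fun h => by
  have := hL.four_le_length hij (.cons (hL.adj i) (.cons h (.cons (hL.adj j).symm .nil)))
  simp at this

lemma neighbor_injective (hL : G.IsSeparatedLeafFamily c b) : Function.Injective b :=
  fun i j h => by
    by_contra hij
    exact hL.not_adj_neighbor_leaf hij (h ▸ (hL.adj j).symm)

lemma not_exists_lt_and_eq_neighbor (hL : G.IsSeparatedLeafFamily c b) (i : ℕ) (j : Fin r) :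
    ¬∃ l : Fin r, (l : ℕ) < i ∧ c l = b j :=
  fun ⟨l, _, hl⟩ => hL.neighbor_ne_leaf j l hl.symm

variable {i : Fin r} {x : V}

lemma eq_leaf_of_contractLeaves_eq (hL : G.IsSeparatedLeafFamily c b)
    (h : contractLeaves c b i x = c i) : x = c i := by
  rcases contractLeaves_eq_or (b := b) (i := i) hL.injective x with hx | ⟨j, -, rfl, hx⟩
  · rwa [hx] at h
  · exact absurd (hx ▸ h) (hL.neighbor_ne_leaf j i)

lemma eq_neighbor_of_contractLeaves_eq (hL : G.IsSeparatedLeafFamily c b)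
    (h : contractLeaves c b i x = b i) : x = b i := by
  rcases contractLeaves_eq_or (b := b) (i := i) hL.injective x with hx | ⟨j, hj, rfl, hx⟩
  · rwa [hx] at h
  · exact absurd (hL.neighbor_injective (hx ▸ h)) (Fin.ne_of_lt hj)

lemma contractLeaves_eq_self_of_adj (hL : G.IsSeparatedLeafFamily c b) (h : G.Adj (b i) x) :
    contractLeaves c b i x = x := by
  rcases contractLeaves_eq_or (b := b) (i := i) hL.injective x with hx | ⟨j, hj, rfl, -⟩
  · exact hx
  · exact absurd h (hL.not_adj_neighbor_leaf (Fin.ne_of_gt hj))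

lemma contractLeaves_eq_self_of_adj_contractLeaves (hL : G.IsSeparatedLeafFamily c b)
    (h : G.Adj (b i) (contractLeaves c b i x)) : contractLeaves c b i x = x := by
  rcases contractLeaves_eq_or (b := b) (i := i) hL.injective x with hx | ⟨j, hj, rfl, hx⟩
  · exact hx
  · exact absurd (hx ▸ h) (hL.not_adj_neighbor_neighbor (Fin.ne_of_gt hj))

lemma contractedAdj_symm {i : ℕ} {u v : V} (h : contractedAdj G c b i u v) :
    contractedAdj G c b i v u :=
  let ⟨x, y, hxy, hx, hy⟩ := h
  ⟨y, x, hxy.symm, hy, hx⟩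

lemma contractedAdj_leaf (hL : G.IsSeparatedLeafFamily c b) :
    contractedAdj G c b i (c i) (b i) :=
  ⟨c i, b i, hL.adj i, contractLeaves_of_not (not_exists_lt_and_eq_self hL.injective i),
    contractLeaves_of_not (hL.not_exists_lt_and_eq_neighbor i i)⟩

lemma eq_of_contractedAdj_leaf (hL : G.IsSeparatedLeafFamily c b) {v : V}
    (h : contractedAdj G c b i (c i) v) : v = b i := by
  obtain ⟨x, y, hxy, hx, rfl⟩ := h
  rw [hL.eq_leaf_of_contractLeaves_eq hx] at hxy
  rw [hL.eq_of_adj i y hxy, contractLeaves_of_not (hL.not_exists_lt_and_eq_neighbor i i)]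

lemma adj_of_contractedAdj_neighbor (hL : G.IsSeparatedLeafFamily c b) {u : V}
    (h : contractedAdj G c b i (b i) u) : G.Adj (b i) u := by
  obtain ⟨x, y, hxy, hx, rfl⟩ := h
  rw [hL.eq_neighbor_of_contractLeaves_eq hx] at hxy
  rwa [hL.contractLeaves_eq_self_of_adj hxy]

lemma not_contractedAdj_of_neighbor (hL : G.IsSeparatedLeafFamily c b)
    (htri : ¬∃ u v : V, G.Adj (b i) u ∧ G.Adj (b i) v ∧ G.Adj u v) (u v : V)
    (hu : contractedAdj G c b i (b i) u) (hv : contractedAdj G c b i (b i) v) :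
    ¬contractedAdj G c b i u v := by
  rintro ⟨x, y, hxy, rfl, rfl⟩
  have hx := hL.adj_of_contractedAdj_neighbor hu
  have hy := hL.adj_of_contractedAdj_neighbor hv
  rw [hL.contractLeaves_eq_self_of_adj_contractLeaves hx] at hx
  rw [hL.contractLeaves_eq_self_of_adj_contractLeaves hy] at hy
  exact htri ⟨x, y, hx, hy, hxy⟩

theorem mem_sup_leafSumIdeal_of_mul_mem [DecidableEq V] {k : Type*} [Field k]
    (hL : G.IsSeparatedLeafFamily c b)
    (htri : ¬∃ u v : V, G.Adj (b i) u ∧ G.Adj (b i) v ∧ G.Adj u v) {g : MvPolynomial V k}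
    (hg : (X (c i) + X (b i)) * g ∈ edgeIdeal k G ^ 2 ⊔ leafSumIdeal k c b i) :
    g ∈ edgeIdeal k G ^ 2 ⊔ leafSumIdeal k c b i := by
  refine Ideal.mem_sup_of_mul_mem_sup (substLeaves k c b i)
    (leafSumIdeal_le_ker hL.injective (hL.not_exists_lt_and_eq_neighbor i))
    (sub_substLeaves_mem hL.injective) ?_ ?_ hg
  · rw [map_add, substLeaves_X_of_not (not_exists_lt_and_eq_self hL.injective i),
      substLeaves_X_of_not (hL.not_exists_lt_and_eq_neighbor i i)]
  · rw [Ideal.map_pow, edgeIdeal_eq_span_monomial,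
      map_span_monomial_edgeExponents _ _ (substLeaves_X (k := k) (c := c) (b := b) (i := i)),
      span_monomial_pow_two]
    exact fun _ => mem_span_monomial_of_X_add_X_mul_mem _ (hL.adj i).ne
      (exists_le_or_exists_le_of_exists_le_add_single (A := contractedAdj G c b i)
        (fun _ _ => contractedAdj_symm) hL.contractedAdj_leaf
        (fun _ => hL.eq_of_contractedAdj_leaf) (hL.not_contractedAdj_of_neighbor htri))

end SimpleGraph.IsSeparatedLeafFamily

end Leaves

/-- Let `G` be a finite simple graph with edge ideal `I = I(G)`, and
let `c₁, …, c_r` be distinct leaves of `G` (vertices of degree one) with `b_i` the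
unique neighbor of `c_i`.  Assume `d(c_i, c_j) ≥ 4` for `i ≠ j` and that no `b_i` lies
on a triangle of `G`.  Then `x_{c₁} + x_{b₁}, …, x_{c_r} + x_{b_r}` is a regular
sequence on `R/I²`. -/
theorem stmt10 {V k : Type*} [Fintype V] [DecidableEq V] [Field k]
    (G : SimpleGraph V) [DecidableRel G.Adj]
    (r : ℕ) (c b : Fin r → V)
    (hc : Function.Injective c)
    (hleaf : ∀ i, G.neighborFinset (c i) = {b i})
    (hdist : ∀ i j, i ≠ j → 4 ≤ G.dist (c i) (c j))
    (htri : ∀ i, ¬ ∃ u v : V, G.Adj (b i) u ∧ G.Adj (b i) v ∧ G.Adj u v) :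
    RingTheory.Sequence.IsRegular ((MvPolynomial V k) ⧸ (edgeIdeal k G ^ 2))
      (List.ofFn fun i : Fin r => (X (c i) + X (b i) : MvPolynomial V k)) := by
  have hL : G.IsSeparatedLeafFamily c b :=
    { injective := hc
      adj := fun i => (G.mem_neighborFinset _ _).mp (hleaf i ▸ Finset.mem_singleton_self _)
      eq_of_adj := fun i v h =>
        Finset.mem_singleton.mp (hleaf i ▸ (G.mem_neighborFinset _ _).mpr h)
      four_le_dist := hdist }
  refine ⟨(RingTheory.Sequence.isWeaklyRegular_iff _ _).mpr fun i hi => ?_, ?_⟩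
  · rw [List.length_ofFn] at hi
    rw [Ideal.ofList_take_ofFn, List.getElem_ofFn, isSMulRegular_quotient_smul_top_iff]
    exact fun _ => hL.mem_sup_leafSumIdeal_of_mul_mem (i := ⟨i, hi⟩) (htri _)
  · refine top_ne_smul_top_of_sup_ne_top (ne_top_of_le_ne_top
      (RingHom.ker_ne_top (constantCoeff (σ := V) (R := k))) (sup_le ?_ ?_))
    · refine (Ideal.pow_le_self two_ne_zero).trans (Ideal.span_le.mpr ?_)
      rintro _ ⟨u, v, -, rfl⟩
      simp
    · refine Ideal.span_le.mpr fun p hp => ?_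
      obtain ⟨j, rfl⟩ := (List.mem_ofFn' _ p).mp hp
      simp
end
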